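/- The set of vertices still unconnected after steps 1–3 of the connection procedure forms an independent set in the forest H (no two of them are adjacent in H). -/

import Mathlib

section
variable {V : Type*} (par : V → Option V) (col : V → Fin 3)

/-- Step 1: every vertex of color 1 (here color `0`) that has a parent chooses
its parent. -/
def S1 : Set V := {v | col v = 0 ∧ ∃ u, par v = some u}

/-- Vertices marked "connected" after step 1: the choosers and the chosen
parents. -/
def C1 : Set V := S1 par col ∪ {u | ∃ v ∈ S1 par col, par v = some u}

/-- Step 2: every vertex of color 2 (here color `1`) that is not yet connected
and whose parent is not yet connected chooses its parent. -/
def S2 : Set V := {v | col v = 1 ∧ v ∉ C1 par col ∧ ∃ u, par v = some u ∧ u ∉ C1 par col}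

/-- Vertices marked "connected" after step 2. -/
def C2 : Set V := C1 par col ∪ S2 par col ∪ {u | ∃ v ∈ S2 par col, par v = some u}

/-- Step 3: likewise for color 3 (here color `2`). -/
def S3 : Set V := {v | col v = 2 ∧ v ∉ C2 par col ∧ ∃ u, par v = some u ∧ u ∉ C2 par col}

/-- Vertices marked "connected" after step 3. -/
def C3 : Set V := C2 par col ∪ S3 par col ∪ {u | ∃ v ∈ S3 par col, par v = some u}

/-- Step 4: every vertex still unconnected after steps 1–3 that has a parent
chooses its parent. -/
def S4 : Set V := {v | v ∉ C3 par col ∧ ∃ u, par v = some u}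

/-- The edge from `v` to its parent `u` is chosen during steps 1–3. -/
def chosen13 (v u : V) : Prop :=
  par v = some u ∧ v ∈ S1 par col ∪ S2 par col ∪ S3 par col

/-- The edge from `v` to its parent `u` is chosen during the whole procedure
(steps 1–4). -/
def chosen (v u : V) : Prop :=
  par v = some u ∧ v ∈ S1 par col ∪ S2 par col ∪ S3 par col ∪ S4 par col

end

/-! The connected sets only grow from step to step. So if a vertex `v` and its parent `u` were
both unconnected after step 3, they were unconnected at the step belonging to the color of `v`,
and in that step `v` would have chosen `u`. -/

section
variable {V : Type*} (par : V → Option V) (col : V → Fin 3)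

theorem C1_subset_C2 : C1 par col ⊆ C2 par col := fun _ h => Or.inl (Or.inl h)

theorem C2_subset_C3 : C2 par col ⊆ C3 par col := fun _ h => Or.inl (Or.inl h)

theorem S1_subset_C1 : S1 par col ⊆ C1 par col := fun _ h => Or.inl h

theorem S2_subset_C2 : S2 par col ⊆ C2 par col := fun _ h => Or.inl (Or.inr h)

theorem S3_subset_C3 : S3 par col ⊆ C3 par col := fun _ h => Or.inl (Or.inr h)

end

theorem stmt_13_general {V : Type*} (par : V → Option V) (col : V → Fin 3) :
    ∀ v u : V, v ∉ C3 par col → u ∉ C3 par col → par v ≠ some u := by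
  intro v u hv hu hpar
  have hv₂ : v ∉ C2 par col := fun h => hv (C2_subset_C3 par col h)
  have hu₂ : u ∉ C2 par col := fun h => hu (C2_subset_C3 par col h)
  have hv₁ : v ∉ C1 par col := fun h => hv₂ (C1_subset_C2 par col h)
  have hu₁ : u ∉ C1 par col := fun h => hu₂ (C1_subset_C2 par col h)
  match hcol : col v with
  | 0 => exact hv₁ (S1_subset_C1 par col ⟨hcol, u, hpar⟩)
  | 1 => exact hv₂ (S2_subset_C2 par col ⟨hcol, hv₁, u, hpar, hu₁⟩)
  | 2 => exact hv (S3_subset_C3 par col ⟨hcol, hv₂, u, hpar, hu₂⟩)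

/-- The set of vertices still unconnected after steps 1–3 of the connection
procedure on a properly 3-colored rooted forest `H` is an independent set in
`H`: no two unconnected vertices are adjacent (in particular, neither is the
parent of the other). -/
theorem stmt_13 {V : Type*} (par : V → Option V) (col : V → Fin 3)
    (hproper : ∀ v u, par v = some u → col v ≠ col u) :
    ∀ v u : V, v ∉ C3 par col → u ∉ C3 par col → par v ≠ some u :=
  stmt_13_general par col
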